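/- Let A and B be n×n positive definite complex matrices and define the operator fidelity F(X, Y) = (X^{1/2} Y X^{1/2})^{1/2}. If A^{1/2} ⪯ F(A, B) in the near-order, then for every natural number k ≥ 1 one has A^{2^{k-1}} ⪯ F(A^{2^k}, B) in the near-order. -/

import Mathlib

open Matrix
open scoped ComplexOrder

/-- Real power of a matrix via functional calculus on the spectrum (junk value
if the matrix is not Hermitian). -/
noncomputable def mrpow {n : ℕ} (A : Matrix (Fin n) (Fin n) ℂ) (r : ℝ) :
    Matrix (Fin n) (Fin n) ℂ :=
  if hA : A.IsHermitian then
    (hA.eigenvectorUnitary : Matrix (Fin n) (Fin n) ℂ) *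
      diagonal (fun i => ((hA.eigenvalues i ^ r : ℝ) : ℂ)) *
      (star (hA.eigenvectorUnitary : Matrix (Fin n) (Fin n) ℂ))
  else A

/-- The metric geometric mean `A # B = A^{1/2} (A^{-1/2} B A^{-1/2})^{1/2} A^{1/2}`. -/
noncomputable def sharp {n : ℕ} (A B : Matrix (Fin n) (Fin n) ℂ) :
    Matrix (Fin n) (Fin n) ℂ :=
  mrpow A (1/2) * mrpow (mrpow A (-(1/2)) * B * mrpow A (-(1/2))) (1/2) * mrpow A (1/2)

/-- The Loewner order `A ≤ B`, i.e. `B - A` is positive semidefinite. -/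
def loewnerLE {n : ℕ} (A B : Matrix (Fin n) (Fin n) ℂ) : Prop := (B - A).PosSemidef

/-- The near-order `A ⪯ B`, i.e. `A⁻¹ # B ≥ I` in the Loewner order. -/
def nearLE {n : ℕ} (A B : Matrix (Fin n) (Fin n) ℂ) : Prop := loewnerLE 1 (sharp A⁻¹ B)

/-- The operator fidelity `F(X, Y) = (X^{1/2} Y X^{1/2})^{1/2}`. -/
noncomputable def fid {n : ℕ} (X Y : Matrix (Fin n) (Fin n) ℂ) :
    Matrix (Fin n) (Fin n) ℂ :=
  mrpow (mrpow X (1/2) * Y * mrpow X (1/2)) (1/2)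

/-!
`X ⪯ Y` says `1 ≤ G` for `G = X⁻¹ # Y`, and `G` solves the Riccati equation `G X G = Y`.
Suppose `P ⪯ C` with `C = F(P², B) = (P B P)^{1/2}` and put `T = P G P`. Then `P² ≤ T`, and
`P² B P² = P C² P = T G² T ≥ T²` because `G² ≥ 1`, so operator monotonicity of the square root
gives `P² ≤ T ≤ (P² B P²)^{1/2} = F(P⁴, B)`. The Loewner order implies the near-order, again by
monotonicity of the square root, hence `P² ⪯ F(P⁴, B)`. With `P = A^{2^{k-1}}` this is the
induction step from `k` to `k + 1`; the hypothesis is the case `P = A^{1/2}`.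
-/

section StarOrderedRing
variable {R : Type*} [Ring R] [PartialOrder R] [StarRing R] [StarOrderedRing R]

theorem one_le_mul_self_of_one_le {a : R} (h : 1 ≤ a) : 1 ≤ a * a := by
  have hd : 0 ≤ a - 1 := sub_nonneg.mpr h
  have hsq : 0 ≤ (a - 1) * (a - 1) := by
    simpa only [(IsSelfAdjoint.of_nonneg hd).star_eq] using star_mul_self_nonneg (a - 1)
  rw [← sub_nonneg, show a * a - 1 = (a - 1) * (a - 1) + ((a - 1) + (a - 1)) by noncomm_ring]
  exact add_nonneg hsq (add_nonneg hd hd)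

theorem IsStrictlyPositive.mul_self {a : R} (ha : IsStrictlyPositive a) :
    IsStrictlyPositive (a * a) := by
  refine IsStrictlyPositive.iff_of_unital.mpr ⟨?_, ha.isUnit.mul ha.isUnit⟩
  simpa only [(IsSelfAdjoint.of_nonneg ha.nonneg).star_eq] using star_mul_self_nonneg a

end StarOrderedRing

namespace CFC
variable {𝒜 : Type*} [CStarAlgebra 𝒜] [PartialOrder 𝒜] [StarOrderedRing 𝒜]

theorem le_sqrt_conjugate_of_le {x y : 𝒜} (hx : 0 ≤ x) (h : x ≤ y) :
    x ≤ sqrt (sqrt x * y * sqrt x) := by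
  have hxx : sqrt x * x * sqrt x = x * x := by
    calc sqrt x * x * sqrt x = sqrt x * (sqrt x * sqrt x) * sqrt x := by rw [sqrt_mul_sqrt_self x]
      _ = sqrt x * sqrt x * (sqrt x * sqrt x) := by simp only [mul_assoc]
      _ = x * x := by rw [sqrt_mul_sqrt_self x]
  calc x = sqrt (sqrt x * x * sqrt x) := by rw [hxx, sqrt_mul_self x]
    _ ≤ sqrt (sqrt x * y * sqrt x) :=
      sqrt_le_sqrt _ _ ((sqrt_nonneg x).isSelfAdjoint.conjugate_le_conjugate h)

theorem mul_self_le_sqrt_of_one_le {p g b : 𝒜} (hp : 0 ≤ p) (hg : 1 ≤ g)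
    (h : g * p * g * (g * p * g) = p * b * p) : p * p ≤ sqrt (p * p * b * (p * p)) := by
  set t := p * g * p
  have ht : 0 ≤ t := conjugate_nonneg_of_nonneg (zero_le_one.trans hg) hp
  have hpt : p * p ≤ t := by simpa using hp.isSelfAdjoint.conjugate_le_conjugate hg
  have hexpand : p * p * b * (p * p) = t * (g * g) * t := by
    calc p * p * b * (p * p) = p * (p * b * p) * p := by simp only [mul_assoc]
      _ = p * (g * p * g * (g * p * g)) * p := by rw [h]
      _ = t * (g * g) * t := by simp only [t, mul_assoc]
  calc p * p ≤ t := hpt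
    _ = sqrt (t * 1 * t) := by rw [mul_one, sqrt_mul_self t]
    _ ≤ sqrt (t * (g * g) * t) :=
      sqrt_le_sqrt _ _ (ht.isSelfAdjoint.conjugate_le_conjugate (one_le_mul_self_of_one_le hg))
    _ = sqrt (p * p * b * (p * p)) := by rw [hexpand]

end CFC

-- The L2 operator norm makes matrices a C⋆-algebra, in which `CFC.sqrt` is operator monotone.
open scoped MatrixOrder Matrix.Norms.L2Operator

section GeometricMean
variable {n : ℕ} {A B P X Y : Matrix (Fin n) (Fin n) ℂ}

theorem mrpow_eq_rpow (hA : 0 ≤ A) (r : ℝ) : mrpow A r = A ^ r := by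
  have hH : A.IsHermitian := hA.posSemidef.isHermitian
  rw [CFC.rpow_eq_cfc_real hA, hH.cfc_eq, mrpow, dif_pos hH, IsHermitian.cfc,
    Unitary.conjStarAlgAut_apply]
  rfl

theorem Matrix.inv_eq_rpow_neg_one (hA : IsStrictlyPositive A) : A⁻¹ = A ^ (-1 : ℝ) := by
  rw [nonsing_inv_eq_ringInverse, CFC.inverse_eq_rpow_neg_one]

theorem sharp_eq (hA : 0 ≤ A) (hB : 0 ≤ B) :
    sharp A B = CFC.sqrt A * CFC.sqrt (A ^ (-(1 / 2) : ℝ) * B * A ^ (-(1 / 2) : ℝ)) *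
      CFC.sqrt A := by
  have hinner : 0 ≤ A ^ (-(1 / 2) : ℝ) * B * A ^ (-(1 / 2) : ℝ) :=
    CFC.rpow_nonneg.isSelfAdjoint.conjugate_nonneg hB
  rw [sharp, mrpow_eq_rpow hA, mrpow_eq_rpow hA, mrpow_eq_rpow hinner, CFC.sqrt_eq_rpow,
    CFC.sqrt_eq_rpow]

theorem fid_eq (hX : 0 ≤ X) (hY : 0 ≤ Y) :
    fid X Y = CFC.sqrt (CFC.sqrt X * Y * CFC.sqrt X) := by
  have hinner : 0 ≤ X ^ (1 / 2 : ℝ) * Y * X ^ (1 / 2 : ℝ) :=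
    CFC.rpow_nonneg.isSelfAdjoint.conjugate_nonneg hY
  rw [fid, mrpow_eq_rpow hX, mrpow_eq_rpow hinner, CFC.sqrt_eq_rpow, CFC.sqrt_eq_rpow]

theorem sharp_mul_inv_mul_sharp (hA : IsStrictlyPositive A) (hB : 0 ≤ B) :
    sharp A B * A⁻¹ * sharp A B = B := by
  rw [sharp_eq hA.nonneg hB, inv_eq_rpow_neg_one hA, CFC.sqrt_eq_rpow]
  set a := A ^ (1 / 2 : ℝ)
  set a' := A ^ (-(1 / 2) : ℝ)
  set s := CFC.sqrt (a' * B * a')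
  have hinv : A ^ (-1 : ℝ) = a' * a' := by rw [← CFC.rpow_add hA.isUnit]; norm_num
  have haa' : a * a' = 1 := CFC.rpow_mul_rpow_neg _
  have ha'a : a' * a = 1 := CFC.rpow_neg_mul_rpow _
  have hss : s * s = a' * B * a' :=
    CFC.sqrt_mul_sqrt_self _ (CFC.rpow_nonneg.isSelfAdjoint.conjugate_nonneg hB)
  calc a * s * a * A ^ (-1 : ℝ) * (a * s * a) = a * s * (a * a') * (a' * a) * s * a := by
        rw [hinv]; simp only [mul_assoc]
    _ = a * (s * s) * a := by rw [haa', ha'a]; simp only [mul_one, mul_assoc]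
    _ = (a * a') * B * (a' * a) := by rw [hss]; simp only [mul_assoc]
    _ = B := by rw [haa', ha'a, one_mul, mul_one]

theorem nearLE_of_le (hX : IsStrictlyPositive X) (h : X ≤ Y) : nearLE X Y := by
  have hY : 0 ≤ Y := hX.nonneg.trans h
  have hXinv : IsStrictlyPositive X⁻¹ := by
    rw [inv_eq_rpow_neg_one hX]; exact IsStrictlyPositive.rpow X _
  have hsharp : sharp X⁻¹ Y = X ^ (-(1 / 2) : ℝ) * CFC.sqrt (CFC.sqrt X * Y * CFC.sqrt X) *
      X ^ (-(1 / 2) : ℝ) := by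
    rw [sharp_eq hXinv.nonneg hY, inv_eq_rpow_neg_one hX, CFC.sqrt_eq_rpow (a := X ^ (-1 : ℝ)),
      CFC.rpow_rpow _ _ _ (by norm_num), CFC.rpow_rpow _ _ _ (by norm_num),
      CFC.sqrt_eq_rpow (a := X)]
    norm_num
  have hunit : X ^ (-(1 / 2) : ℝ) * X * X ^ (-(1 / 2) : ℝ) = 1 := by
    calc X ^ (-(1 / 2) : ℝ) * X * X ^ (-(1 / 2) : ℝ) = X ^ (-(1 / 2) + 1 + -(1 / 2) : ℝ) := by
          rw [CFC.rpow_add hX.isUnit, CFC.rpow_add hX.isUnit, CFC.rpow_one X]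
      _ = 1 := by norm_num [CFC.rpow_zero X]
  change 1 ≤ sharp X⁻¹ Y
  rw [hsharp, ← hunit]
  exact CFC.rpow_nonneg.isSelfAdjoint.conjugate_le_conjugate
    (CFC.le_sqrt_conjugate_of_le hX.nonneg h)

theorem nearLE_mul_self_fid (hP : IsStrictlyPositive P) (hB : 0 ≤ B)
    (h : nearLE P (fid (P * P) B)) : nearLE (P * P) (fid (P * P * (P * P)) B) := by
  have hPinv : IsStrictlyPositive P⁻¹ := by
    rw [inv_eq_rpow_neg_one hP]; exact IsStrictlyPositive.rpow P _
  have hPBP : 0 ≤ P * B * P := hP.nonneg.isSelfAdjoint.conjugate_nonneg hB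
  have hC : fid (P * P) B = CFC.sqrt (P * B * P) := by
    rw [fid_eq hP.mul_self.nonneg hB, CFC.sqrt_mul_self P]
  have hriccati := sharp_mul_inv_mul_sharp hPinv (hC ▸ CFC.sqrt_nonneg _ : 0 ≤ fid (P * P) B)
  rw [nonsing_inv_nonsing_inv P ((isUnit_iff_isUnit_det P).mp hP.isUnit)] at hriccati
  apply nearLE_of_le hP.mul_self
  rw [fid_eq hP.mul_self.mul_self.nonneg hB, CFC.sqrt_mul_self (P * P)]
  refine CFC.mul_self_le_sqrt_of_one_le hP.nonneg h ?_
  rw [hriccati, hC, CFC.sqrt_mul_sqrt_self _ hPBP]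

end GeometricMean

theorem pow_nearLE_fid_of_sqrt_nearLE_fid {n : ℕ} (A B : Matrix (Fin n) (Fin n) ℂ)
    (hA : A.PosDef) (hB : B.PosDef) (h : nearLE (mrpow A (1/2)) (fid A B)) :
    ∀ k : ℕ, 1 ≤ k →
      nearLE (mrpow A ((2 : ℝ) ^ (k - 1))) (fid (mrpow A ((2 : ℝ) ^ k)) B) := by
  have hA' : IsStrictlyPositive A := Matrix.isStrictlyPositive_iff_posDef.mpr hA
  have hsq (r : ℝ) : A ^ r * A ^ r = A ^ (2 * r) := by rw [← CFC.rpow_add hA'.isUnit, two_mul]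
  have hstep (m : ℝ) (hm : nearLE (A ^ m) (fid (A ^ (2 * m)) B)) :
      nearLE (A ^ (2 * m)) (fid (A ^ (2 * (2 * m))) B) := by
    simpa only [hsq] using
      nearLE_mul_self_fid (IsStrictlyPositive.rpow A m) hB.posSemidef.nonneg (by rwa [hsq])
  have hdouble (j : ℕ) : nearLE (A ^ ((2 : ℝ) ^ j / 2)) (fid (A ^ ((2 : ℝ) ^ j)) B) := by
    induction j with
    | zero => simpa only [pow_zero, CFC.rpow_one A, mrpow_eq_rpow hA'.nonneg] using h
    | succ j ih =>
      rw [show (2 : ℝ) ^ (j + 1) / 2 = 2 * (2 ^ j / 2) by ring,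
        show (2 : ℝ) ^ (j + 1) = 2 * (2 * (2 ^ j / 2)) by ring]
      exact hstep _ (by rwa [show 2 * ((2 : ℝ) ^ j / 2) = 2 ^ j by ring])
  intro k hk
  obtain ⟨j, rfl⟩ := Nat.exists_eq_add_of_le' hk
  rw [mrpow_eq_rpow hA'.nonneg, mrpow_eq_rpow hA'.nonneg, Nat.add_sub_cancel,
    show (2 : ℝ) ^ j = 2 ^ (j + 1) / 2 by ring]
  exact hdouble (j + 1)
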